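/- arXiv:2110.14588 — 2 statements merged into one kernel-verified Lean document; each statement's English description precedes it below -/
import Mathlib

section
/- The sigmoidal transformation of the Reichenbach implication, Ĩ(a,c) = ((1 + e^{9/2})·σ(9(I_RC(a,c) − 1/2)) − 1)/(e^{9/2} − 1) where σ(x) = 1/(1+e^{−x}) and I_RC(a,c) = 1 − a + a·c, is again a fuzzy implication: it maps [0,1]² into [0,1], is decreasing in a, increasing in c, and satisfies Ĩ(0,0) = 1, Ĩ(1,1) = 1, Ĩ(1,0) = 0. -/
noncomputable def sigmoid (x : ℝ) : ℝ := 1 / (1 + Real.exp (-x))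

noncomputable def sigReichenbach (a c : ℝ) : ℝ :=
  ((1 + Real.exp (9/2)) * sigmoid (9 * ((1 - a + a * c) - 1/2)) - 1) / (Real.exp (9/2) - 1)

/-!
The sigmoidal transform is `g ∘ I_RC` with `g(x) = ((1 + e^{9/2}) σ(9(x - 1/2)) - 1) / (e^{9/2} - 1)`,
an increasing map fixing `0` and `1`. Composing with `g` therefore preserves the range `[0,1]`,
the monotonicity in each argument and the boundary values of the Reichenbach implication.
-/

open Set

lemma sigmoid_eq_real_sigmoid : sigmoid = Real.sigmoid := by
  funext x
  rw [sigmoid, Real.sigmoid_def, one_div]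

noncomputable def sigmoidalRescale (k x : ℝ) : ℝ :=
  ((1 + Real.exp (k / 2)) * sigmoid (k * (x - 1 / 2)) - 1) / (Real.exp (k / 2) - 1)

lemma sigmoidalRescale_monotone {k : ℝ} (hk : 0 ≤ k) : Monotone (sigmoidalRescale k) := by
  intro x y hxy
  have hden : 0 ≤ Real.exp (k / 2) - 1 := by
    simpa using Real.one_le_exp (by positivity : 0 ≤ k / 2)
  have hσ : sigmoid (k * (x - 1 / 2)) ≤ sigmoid (k * (y - 1 / 2)) := by
    rw [sigmoid_eq_real_sigmoid]
    exact Real.sigmoid_monotone (by gcongr)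
  unfold sigmoidalRescale
  gcongr

@[simp]
lemma sigmoidalRescale_zero (k : ℝ) : sigmoidalRescale k 0 = 0 := by
  have hσ : sigmoid (k * (0 - 1 / 2)) = 1 / (1 + Real.exp (k / 2)) := by
    rw [sigmoid]
    ring_nf
  rw [sigmoidalRescale, hσ, mul_one_div_cancel (by positivity), sub_self, zero_div]

@[simp]
lemma sigmoidalRescale_one {k : ℝ} (hk : k ≠ 0) : sigmoidalRescale k 1 = 1 := by
  have hden : Real.exp (k / 2) - 1 ≠ 0 := by
    rw [sub_ne_zero, Ne, Real.exp_eq_one_iff]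
    exact div_ne_zero hk two_ne_zero
  have hσ : sigmoid (k * (1 - 1 / 2)) = Real.exp (k / 2) / (Real.exp (k / 2) + 1) := by
    rw [sigmoid, Real.exp_neg]
    field_simp
    ring_nf
  rw [sigmoidalRescale, hσ, div_eq_one_iff_eq hden]
  field_simp
  ring

def reichenbach (a c : ℝ) : ℝ := 1 - a + a * c

lemma reichenbach_mem_Icc {a c : ℝ} (ha : a ∈ Icc (0 : ℝ) 1) (hc : c ∈ Icc (0 : ℝ) 1) :
    reichenbach a c ∈ Icc (0 : ℝ) 1 := by
  obtain ⟨ha₀, ha₁⟩ := ha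
  obtain ⟨hc₀, hc₁⟩ := hc
  constructor <;> unfold reichenbach <;> nlinarith

lemma reichenbach_antitone_left {c : ℝ} (hc : c ≤ 1) : Antitone fun a ↦ reichenbach a c := by
  intro a₁ a₂ h
  unfold reichenbach
  nlinarith

lemma reichenbach_monotone_right {a : ℝ} (ha : 0 ≤ a) : Monotone (reichenbach a) := by
  intro c₁ c₂ h
  unfold reichenbach
  nlinarith

lemma sigReichenbach_eq (a c : ℝ) :
    sigReichenbach a c = sigmoidalRescale 9 (reichenbach a c) := rfl

theorem sigmoidal_reichenbach_is_fuzzy_implication :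
    (∀ a c : ℝ, a ∈ Set.Icc (0:ℝ) 1 → c ∈ Set.Icc (0:ℝ) 1 →
      sigReichenbach a c ∈ Set.Icc (0:ℝ) 1) ∧
    (∀ a₁ a₂ c : ℝ, a₁ ∈ Set.Icc (0:ℝ) 1 → a₂ ∈ Set.Icc (0:ℝ) 1 → c ∈ Set.Icc (0:ℝ) 1 →
      a₁ ≤ a₂ → sigReichenbach a₂ c ≤ sigReichenbach a₁ c) ∧
    (∀ a c₁ c₂ : ℝ, a ∈ Set.Icc (0:ℝ) 1 → c₁ ∈ Set.Icc (0:ℝ) 1 → c₂ ∈ Set.Icc (0:ℝ) 1 →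
      c₁ ≤ c₂ → sigReichenbach a c₁ ≤ sigReichenbach a c₂) ∧
    sigReichenbach 0 0 = 1 ∧ sigReichenbach 1 1 = 1 ∧ sigReichenbach 1 0 = 0 := by
  have hmono : Monotone (sigmoidalRescale 9) := sigmoidalRescale_monotone (by norm_num)
  simp only [sigReichenbach_eq]
  refine ⟨fun a c ha hc ↦ ?_, fun a₁ a₂ c _ _ hc h ↦ ?_, fun a c₁ c₂ ha _ _ h ↦ ?_, ?_, ?_, ?_⟩
  · simpa using hmono.mapsTo_Icc (reichenbach_mem_Icc ha hc)
  · exact hmono (reichenbach_antitone_left hc.2 h)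
  · exact hmono (reichenbach_monotone_right ha.1 h)
  all_goals norm_num [reichenbach]
end

section
/- Sion's minimax theorem: if Φ ⊂ ℝᵐ and Θ ⊂ ℝⁿ are compact convex sets and V: Φ × Θ → ℝ is upper semicontinuous and quasi-concave in its second argument for each fixed first argument, and lower semicontinuous and quasi-convex in its first argument for each fixed second argument, then min_{φ∈Φ} max_{θ∈Θ} V(φ,θ) = max_{θ∈Θ} min_{φ∈Φ} V(φ,θ). -/
open Set Filter Topology

section Aux

variable {E : Type*} [TopologicalSpace E] {f : E → ℝ} {s : Set E}

lemma lsc_restrict_aux (hf : LowerSemicontinuousOn f s) :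
    LowerSemicontinuous (fun x : s => f x) := by
  intro x y hy
  have h := hf x x.2 y hy
  rw [← map_nhds_subtype_val] at h
  exact h

lemma usc_neg_aux (hf : UpperSemicontinuousOn f s) :
    LowerSemicontinuousOn (fun x => -f x) s := by
  intro x hx y hy
  have hy' : y < -f x := hy
  have := hf x hx (-y) (by linarith)
  filter_upwards [this] with z hz
  show y < -f z
  linarith

lemma lsc_sublevel_compact (hs : IsCompact s) (hf : LowerSemicontinuousOn f s) (t : ℝ) :
    IsCompact {x ∈ s | f x ≤ t} := by
  have : CompactSpace s := isCompact_iff_compactSpace.mp hs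
  have hg : LowerSemicontinuous (fun x : s => f x) := lsc_restrict_aux hf
  have hc : IsClosed ((fun x : s => f x) ⁻¹' Iic t) := hg.isClosed_preimage t
  have hcc : IsCompact ((fun x : s => f x) ⁻¹' Iic t) := hc.isCompact
  have himg := hcc.image continuous_subtype_val
  convert himg using 1
  ext x
  constructor
  · rintro ⟨hxs, hxt⟩
    exact ⟨⟨x, hxs⟩, hxt, rfl⟩
  · rintro ⟨⟨y, hy⟩, hyt, rfl⟩
    exact ⟨hy, hyt⟩

lemma lsc_exists_min [T2Space E] (hs : IsCompact s) (hne : s.Nonempty)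
    (hf : LowerSemicontinuousOn f s) : ∃ x ∈ s, ∀ z ∈ s, f x ≤ f z := by
  have : Nonempty s := hne.to_subtype
  set K : s → Set E := fun z => {x ∈ s | f x ≤ f z} with hK
  have hKc : ∀ z, IsCompact (K z) := fun z => lsc_sublevel_compact hs hf _
  have hKcl : ∀ z, IsClosed (K z) := fun z => (hKc z).isClosed
  have hKne : ∀ z : s, (K z).Nonempty := fun z => ⟨z, z.2, le_rfl⟩
  have hdir : Directed (· ⊇ ·) K := by
    intro a b
    rcases le_total (f a) (f b) with h | h
    · exact ⟨a, fun x hx => ⟨hx.1, hx.2⟩, fun x hx => ⟨hx.1, hx.2.trans h⟩⟩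
    · exact ⟨b, fun x hx => ⟨hx.1, hx.2.trans h⟩, fun x hx => ⟨hx.1, hx.2⟩⟩
  obtain ⟨x, hx⟩ := IsCompact.nonempty_iInter_of_directed_nonempty_isCompact_isClosed
    K hdir hKne hKc hKcl
  simp only [mem_iInter] at hx
  obtain ⟨z₀⟩ := ‹Nonempty s›
  exact ⟨x, (hx z₀).1, fun z hz => (hx ⟨z, hz⟩).2⟩

lemma usc_exists_max [T2Space E] (hs : IsCompact s) (hne : s.Nonempty)
    (hf : UpperSemicontinuousOn f s) : ∃ x ∈ s, ∀ z ∈ s, f z ≤ f x := by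
  obtain ⟨x, hx, h⟩ := lsc_exists_min hs hne (usc_neg_aux hf)
  exact ⟨x, hx, fun z hz => by have := h z hz; linarith⟩

lemma lscw_max {g : E → ℝ} {x : E} (hf : LowerSemicontinuousWithinAt f s x)
    (hg : LowerSemicontinuousWithinAt g s x) :
    LowerSemicontinuousWithinAt (fun z => max (f z) (g z)) s x := by
  intro y hy
  rcases lt_max_iff.mp hy with h | h
  · filter_upwards [hf y h] with z hz using lt_max_iff.mpr (Or.inl hz)
  · filter_upwards [hg y h] with z hz using lt_max_iff.mpr (Or.inr hz)

end Aux

section Sion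

variable {m n : ℕ} {Φ : Set (Fin m → ℝ)} {Θ : Set (Fin n → ℝ)}
  {V : (Fin m → ℝ) → (Fin n → ℝ) → ℝ}

/-- Komiya's two-point lemma. -/
lemma sion_pair (hΘv : Convex ℝ Θ)
    (hlsc : ∀ θ ∈ Θ, LowerSemicontinuousOn (fun φ => V φ θ) Φ)
    (hqcx : ∀ θ ∈ Θ, QuasiconvexOn ℝ Φ (fun φ => V φ θ))
    (husc : ∀ φ ∈ Φ, UpperSemicontinuousOn (fun θ => V φ θ) Θ)
    (hqcv : ∀ φ ∈ Φ, QuasiconcaveOn ℝ Θ (fun θ => V φ θ))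
    {Φ' : Set (Fin m → ℝ)} (hΦ'c : IsCompact Φ') (hΦ'v : Convex ℝ Φ')
    (hΦ'ne : Φ'.Nonempty) (hsub : Φ' ⊆ Φ)
    {θ₁ θ₂ : Fin n → ℝ} (h₁ : θ₁ ∈ Θ) (h₂ : θ₂ ∈ Θ) {α : ℝ}
    (h : ∀ φ ∈ Φ', α < max (V φ θ₁) (V φ θ₂)) :
    ∃ θ ∈ Θ, ∀ φ ∈ Φ', α < V φ θ := by
  -- the max function is lsc on Φ', so its min on Φ' is attained; pick β between
  have hlsc' : ∀ θ ∈ Θ, LowerSemicontinuousOn (fun φ => V φ θ) Φ' :=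
    fun θ hθ => (hlsc θ hθ).mono hsub
  have hg : LowerSemicontinuousOn (fun x => max (V x θ₁) (V x θ₂)) Φ' :=
    fun x hx => lscw_max (hlsc' θ₁ h₁ x hx) (hlsc' θ₂ h₂ x hx)
  obtain ⟨xm, hxm, hxmin⟩ := lsc_exists_min hΦ'c hΦ'ne hg
  set β : ℝ := (α + max (V xm θ₁) (V xm θ₂)) / 2 with hβdef
  have hαβ : α < β := by
    have := h xm hxm; simp only [hβdef]; linarith
  have hβ : ∀ x ∈ Φ', β < max (V x θ₁) (V x θ₂) := by
    intro x hx
    have h1 := hxmin x hx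
    have h2 := h xm hxm
    simp only [hβdef]; linarith
  by_contra hcon
  push_neg at hcon
  have hcon' : ∀ θ ∈ Θ, ∃ φ ∈ Φ', V φ θ ≤ α := hcon
  set S : Set (Fin n → ℝ) := segment ℝ θ₁ θ₂ with hSdef
  have hSΘ : S ⊆ Θ := hΘv.segment_subset h₁ h₂
  set A : Set (Fin m → ℝ) := {x ∈ Φ' | V x θ₁ ≤ β} with hAdef
  set B : Set (Fin m → ℝ) := {x ∈ Φ' | V x θ₂ ≤ β} with hBdef
  have hAc : IsCompact A := lsc_sublevel_compact hΦ'c (hlsc' θ₁ h₁) β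
  have hBc : IsCompact B := lsc_sublevel_compact hΦ'c (hlsc' θ₂ h₂) β
  have hABdisj : ∀ x, x ∈ A → x ∈ B → False := by
    intro x hxA hxB
    have := hβ x hxA.1
    have h1 := hxA.2; have h2 := hxB.2
    rcases max_cases (V x θ₁) (V x θ₂) with ⟨he, _⟩ | ⟨he, _⟩ <;> rw [he] at this <;> linarith
  -- quasiconcavity: value on a segment dominates the min of the endpoints
  have hqc : ∀ x ∈ Φ', ∀ z ∈ S, min (V x θ₁) (V x θ₂) ≤ V x z := by
    intro x hx z hz
    have hconv := hqcv x (hsub hx) (min (V x θ₁) (V x θ₂))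
    have hm1 : θ₁ ∈ {θ ∈ Θ | min (V x θ₁) (V x θ₂) ≤ V x θ} := ⟨h₁, min_le_left _ _⟩
    have hm2 : θ₂ ∈ {θ ∈ Θ | min (V x θ₁) (V x θ₂) ≤ V x θ} := ⟨h₂, min_le_right _ _⟩
    exact (hconv.segment_subset hm1 hm2 hz).2
  set C : (Fin n → ℝ) → Set (Fin m → ℝ) := fun z => {x ∈ Φ' | V x z ≤ β} with hCdef
  have hCsub : ∀ z ∈ S, C z ⊆ A ∪ B := by
    intro z hz x hx
    have hmin := hqc x hx.1 z hz
    rcases min_cases (V x θ₁) (V x θ₂) with ⟨he, _⟩ | ⟨he, _⟩ <;> rw [he] at hmin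
    · exact Or.inl ⟨hx.1, hmin.trans hx.2⟩
    · exact Or.inr ⟨hx.1, hmin.trans hx.2⟩
  have hCconv : ∀ z ∈ S, Convex ℝ (C z) := by
    intro z hz
    have : C z = Φ' ∩ {x ∈ Φ | V x z ≤ β} := by
      ext x
      constructor
      · rintro ⟨hx, hxb⟩; exact ⟨hx, hsub hx, hxb⟩
      · rintro ⟨hx, _, hxb⟩; exact ⟨hx, hxb⟩
    rw [this]
    exact hΦ'v.inter (hqcx z (hSΘ hz) β)
  -- dichotomy
  have hdich : ∀ z ∈ S, C z ⊆ A ∨ C z ⊆ B := by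
    intro z hz
    by_contra hcc
    push_neg at hcc
    obtain ⟨hnA, hnB⟩ := hcc
    obtain ⟨xa, hxa, hxaA⟩ := not_subset.mp hnA
    obtain ⟨xb, hxb, hxbB⟩ := not_subset.mp hnB
    have hpc := (hCconv z hz).isPreconnected
    obtain ⟨x, hxC, hxA, hxB⟩ := hpc Aᶜ Bᶜ hAc.isClosed.isOpen_compl hBc.isClosed.isOpen_compl
      (fun x hx => by
        by_cases hA : x ∈ A
        · exact Or.inr (fun hB => hABdisj x hA hB)
        · exact Or.inl hA)
      ⟨xa, hxa, hxaA⟩ ⟨xb, hxb, hxbB⟩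
    rcases hCsub z hz hxC with h | h
    · exact hxA h
    · exact hxB h
  set I : Set (Fin n → ℝ) := {z ∈ S | C z ⊆ A} with hIdef
  set J : Set (Fin n → ℝ) := {z ∈ S | C z ⊆ B} with hJdef
  have hSIJ : S ⊆ I ∪ J := by
    intro z hz
    rcases hdich z hz with h | h
    · exact Or.inl ⟨hz, h⟩
    · exact Or.inr ⟨hz, h⟩
  have hθ₁I : θ₁ ∈ I :=
    ⟨left_mem_segment ℝ θ₁ θ₂, fun x hx => ⟨hx.1, hx.2⟩⟩
  have hθ₂J : θ₂ ∈ J :=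
    ⟨right_mem_segment ℝ θ₁ θ₂, fun x hx => ⟨hx.1, hx.2⟩⟩
  -- J is disjoint from closure I (and symmetrically)
  have key : ∀ z ∈ S, ∀ (D E : Set (Fin m → ℝ)), C z ⊆ D →
      (∀ x, x ∈ D → x ∈ E → False) →
      z ∉ closure {w ∈ S | C w ⊆ E} := by
    intro z hz D E hCD hDE hcl
    obtain ⟨x, hxΦ', hxα⟩ := hcon' z (hSΘ hz)
    have hxD : x ∈ D := hCD ⟨hxΦ', hxα.trans hαβ.le⟩
    have husc' := husc x (hsub hxΦ') z (hSΘ hz) β (lt_of_le_of_lt hxα hαβ)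
    rw [eventually_iff, mem_nhdsWithin] at husc'
    obtain ⟨U, hUo, hzU, hUsub⟩ := husc'
    obtain ⟨w, hwU, hwmem⟩ := mem_closure_iff.mp hcl U hUo hzU
    have hwβ : V x w < β := hUsub ⟨hwU, hSΘ hwmem.1⟩
    have hxE : x ∈ E := hwmem.2 ⟨hxΦ', hwβ.le⟩
    exact hDE x hxD hxE
  have hJclI : ∀ z ∈ J, z ∉ closure I := by
    intro z hzJ
    exact key z hzJ.1 B A hzJ.2 (fun x hB hA => hABdisj x hA hB)
  have hIclJ : ∀ z ∈ I, z ∉ closure J := by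
    intro z hzI
    exact key z hzI.1 A B hzI.2 hABdisj
  -- contradiction with connectedness of the segment
  have hpre : IsPreconnected S := (convex_segment θ₁ θ₂).isPreconnected
  obtain ⟨z, hzS, hz1, hz2⟩ := hpre (closure J)ᶜ (closure I)ᶜ
    isClosed_closure.isOpen_compl isClosed_closure.isOpen_compl
    (fun z hz => by
      rcases hSIJ hz with h | h
      · exact Or.inl (hIclJ z h)
      · exact Or.inr (hJclI z h))
    ⟨θ₁, hθ₁I.1, hIclJ θ₁ hθ₁I⟩ ⟨θ₂, hθ₂J.1, hJclI θ₂ hθ₂J⟩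
  rcases hSIJ hzS with h | h
  · exact hz2 (subset_closure h)
  · exact hz1 (subset_closure h)

/-- Komiya's finite lemma. -/
lemma sion_finset (hΘv : Convex ℝ Θ)
    (hlsc : ∀ θ ∈ Θ, LowerSemicontinuousOn (fun φ => V φ θ) Φ)
    (hqcx : ∀ θ ∈ Θ, QuasiconvexOn ℝ Φ (fun φ => V φ θ))
    (husc : ∀ φ ∈ Φ, UpperSemicontinuousOn (fun θ => V φ θ) Θ)
    (hqcv : ∀ φ ∈ Φ, QuasiconcaveOn ℝ Θ (fun θ => V φ θ)) (α : ℝ)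
    (F : Finset (Fin n → ℝ)) :
    ↑F ⊆ Θ → ∀ Φ' : Set (Fin m → ℝ), IsCompact Φ' → Convex ℝ Φ' → Φ'.Nonempty → Φ' ⊆ Φ →
    (∀ φ ∈ Φ', ∃ θ ∈ F, α < V φ θ) → ∃ θ ∈ Θ, ∀ φ ∈ Φ', α < V φ θ := by
  induction F using Finset.cons_induction with
  | empty =>
    intro _ Φ' _ _ hne _ hyp
    obtain ⟨φ, hφ⟩ := hne
    obtain ⟨θ, hθ, -⟩ := hyp φ hφ
    exact absurd hθ (by simp)
  | cons a F' ha IH =>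
    intro hFΘ Φ' hΦ'c hΦ'v hΦ'ne hΦ'Φ hyp
    have haΘ : a ∈ Θ := hFΘ (by simp)
    have hF'Θ : ↑F' ⊆ Θ := fun x hx => hFΘ (by simp [hx])
    set Φ'' : Set (Fin m → ℝ) := {x ∈ Φ' | V x a ≤ α} with hΦ''def
    rcases Φ''.eq_empty_or_nonempty with hemp | hne
    · refine ⟨a, haΘ, fun φ hφ => ?_⟩
      by_contra hle
      push_neg at hle
      have hmem : φ ∈ Φ'' := ⟨hφ, hle⟩
      rw [hemp] at hmem
      exact hmem
    · have hΦ''c : IsCompact Φ'' :=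
        lsc_sublevel_compact hΦ'c ((hlsc a haΘ).mono hΦ'Φ) α
      have hΦ''v : Convex ℝ Φ'' := by
        have : Φ'' = Φ' ∩ {x ∈ Φ | V x a ≤ α} := by
          ext x
          constructor
          · rintro ⟨hx, hxb⟩; exact ⟨hx, hΦ'Φ hx, hxb⟩
          · rintro ⟨hx, _, hxb⟩; exact ⟨hx, hxb⟩
        rw [this]
        exact hΦ'v.inter (hqcx a haΘ α)
      have hΦ''Φ : Φ'' ⊆ Φ := fun x hx => hΦ'Φ hx.1
      have hyp'' : ∀ φ ∈ Φ'', ∃ θ ∈ F', α < V φ θ := by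
        intro φ hφ
        obtain ⟨θ, hθ, hlt⟩ := hyp φ hφ.1
        rcases Finset.mem_cons.mp hθ with rfl | hθ'
        · exact absurd hlt (by have := hφ.2; linarith)
        · exact ⟨θ, hθ', hlt⟩
      obtain ⟨θ', hθ'Θ, hθ'⟩ := IH hF'Θ Φ'' hΦ''c hΦ''v hne hΦ''Φ hyp''
      apply sion_pair hΘv hlsc hqcx husc hqcv hΦ'c hΦ'v hΦ'ne hΦ'Φ hθ'Θ haΘ
      intro φ hφ
      by_cases hle : V φ a ≤ α
      · exact lt_max_iff.mpr (Or.inl (hθ' φ ⟨hφ, hle⟩))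
      · exact lt_max_iff.mpr (Or.inr (lt_of_not_ge hle))

end Sion

theorem sion_minimax {m n : ℕ} (Φ : Set (Fin m → ℝ)) (Θ : Set (Fin n → ℝ))
    (hΦc : IsCompact Φ) (hΦv : Convex ℝ Φ) (hΦne : Φ.Nonempty)
    (hΘc : IsCompact Θ) (hΘv : Convex ℝ Θ) (hΘne : Θ.Nonempty)
    (V : (Fin m → ℝ) → (Fin n → ℝ) → ℝ)
    (hlsc : ∀ θ ∈ Θ, LowerSemicontinuousOn (fun φ => V φ θ) Φ)
    (hqcx : ∀ θ ∈ Θ, QuasiconvexOn ℝ Φ (fun φ => V φ θ))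
    (husc : ∀ φ ∈ Φ, UpperSemicontinuousOn (fun θ => V φ θ) Θ)
    (hqcv : ∀ φ ∈ Φ, QuasiconcaveOn ℝ Θ (fun θ => V φ θ)) :
    (∃ φ₀ ∈ Φ, ∃ θ₀ ∈ Θ,
      (⨅ φ : Φ, ⨆ θ : Θ, V φ θ) = (⨆ θ : Θ, V φ₀ θ) ∧
      (⨆ θ : Θ, ⨅ φ : Φ, V φ θ) = (⨅ φ : Φ, V φ θ₀)) ∧
    (⨅ φ : Φ, ⨆ θ : Θ, V φ θ) = (⨆ θ : Θ, ⨅ φ : Φ, V φ θ) := by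
  have : Nonempty Φ := hΦne.to_subtype
  have : Nonempty Θ := hΘne.to_subtype
  -- boundedness facts
  have hbdA : ∀ φ ∈ Φ, BddAbove (range fun θ : Θ => V φ θ) := by
    intro φ hφ
    obtain ⟨θm, hθm, hmax⟩ := usc_exists_max hΘc hΘne (husc φ hφ)
    exact ⟨V φ θm, by rintro _ ⟨θ, rfl⟩; exact hmax θ θ.2⟩
  have hbdB : ∀ θ ∈ Θ, BddBelow (range fun φ : Φ => V φ θ) := by
    intro θ hθ
    obtain ⟨φm, hφm, hmin⟩ := lsc_exists_min hΦc hΦne (hlsc θ hθ)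
    exact ⟨V φm θ, by rintro _ ⟨φ, rfl⟩; exact hmin φ φ.2⟩
  -- the two value functions
  set h : (Fin m → ℝ) → ℝ := fun φ => ⨆ θ : Θ, V φ θ with hhdef
  set g : (Fin n → ℝ) → ℝ := fun θ => ⨅ φ : Φ, V φ θ with hgdef
  have hhlsc : LowerSemicontinuousOn h Φ := by
    intro x hx
    apply lowerSemicontinuousWithinAt_ciSup
    · filter_upwards [self_mem_nhdsWithin] with y hy using hbdA y hy
    · exact fun θ => hlsc θ.1 θ.2 x hx
  have hgusc : UpperSemicontinuousOn g Θ := by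
    intro x hx
    apply upperSemicontinuousWithinAt_ciInf
    · filter_upwards [self_mem_nhdsWithin] with y hy using hbdB y hy
    · exact fun φ => husc φ.1 φ.2 x hx
  obtain ⟨φ₀, hφ₀, hφ₀min⟩ := lsc_exists_min hΦc hΦne hhlsc
  obtain ⟨θ₀, hθ₀, hθ₀max⟩ := usc_exists_max hΘc hΘne hgusc
  have heq1 : (⨅ φ : Φ, ⨆ θ : Θ, V φ θ) = h φ₀ := by
    have hbb : BddBelow (range fun φ : Φ => h ↑φ) :=
      ⟨h φ₀, by rintro _ ⟨φ, rfl⟩; exact hφ₀min φ.1 φ.2⟩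
    apply le_antisymm
    · exact ciInf_le hbb ⟨φ₀, hφ₀⟩
    · exact le_ciInf fun φ => hφ₀min φ.1 φ.2
  have heq2 : (⨆ θ : Θ, ⨅ φ : Φ, V φ θ) = g θ₀ := by
    have hba : BddAbove (range fun θ : Θ => g ↑θ) :=
      ⟨g θ₀, by rintro _ ⟨θ, rfl⟩; exact hθ₀max θ.1 θ.2⟩
    apply le_antisymm
    · exact ciSup_le fun θ => hθ₀max θ.1 θ.2
    · exact le_ciSup hba ⟨θ₀, hθ₀⟩
  have hle : g θ₀ ≤ h φ₀ := by
    have h1 : g θ₀ ≤ V φ₀ θ₀ := ciInf_le (hbdB θ₀ hθ₀) ⟨φ₀, hφ₀⟩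
    have h2 : V φ₀ θ₀ ≤ h φ₀ := le_ciSup (hbdA φ₀ hφ₀) ⟨θ₀, hθ₀⟩
    exact h1.trans h2
  have hge : h φ₀ ≤ g θ₀ := by
    by_contra hlt
    push_neg at hlt
    set α : ℝ := (g θ₀ + h φ₀) / 2 with hαdef
    have hα1 : g θ₀ < α := by simp only [hαdef]; linarith
    have hα2 : α < h φ₀ := by simp only [hαdef]; linarith
    have hhyp : ∀ φ ∈ Φ, ∃ θ ∈ Θ, α < V φ θ := by
      intro φ hφ
      have : α < h φ := lt_of_lt_of_le hα2 (hφ₀min φ hφ)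
      obtain ⟨θ, hθ⟩ := exists_lt_of_lt_ciSup this
      exact ⟨θ.1, θ.2, hθ⟩
    -- finite subcover
    set Z : Θ → Set (Fin m → ℝ) := fun θ => {x ∈ Φ | V x θ ≤ α} with hZdef
    have hZcl : ∀ θ : Θ, IsClosed (Z θ) :=
      fun θ => (lsc_sublevel_compact hΦc (hlsc θ.1 θ.2) α).isClosed
    have hZint : (Φ ∩ ⋂ θ : Θ, Z θ) = ∅ := by
      rw [eq_empty_iff_forall_notMem]
      rintro x ⟨hxΦ, hxint⟩
      simp only [mem_iInter] at hxint
      obtain ⟨θ, hθ, hlt'⟩ := hhyp x hxΦ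
      exact absurd (hxint ⟨θ, hθ⟩).2 (not_le.mpr hlt')
    obtain ⟨t, ht⟩ := hΦc.elim_finite_subfamily_closed Z hZcl hZint
    set F : Finset (Fin n → ℝ) := t.image Subtype.val with hFdef
    have hFΘ : ↑F ⊆ Θ := by
      intro x hx
      simp only [hFdef, Finset.coe_image, mem_image] at hx
      obtain ⟨θ, _, rfl⟩ := hx
      exact θ.2
    have hFhyp : ∀ φ ∈ Φ, ∃ θ ∈ F, α < V φ θ := by
      intro φ hφ
      by_contra hcc
      push_neg at hcc
      have : φ ∈ Φ ∩ ⋂ θ ∈ t, Z θ := by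
        refine ⟨hφ, ?_⟩
        simp only [mem_iInter]
        intro θ hθ
        refine ⟨hφ, ?_⟩
        have : (θ : Fin n → ℝ) ∈ F := Finset.mem_image_of_mem _ hθ
        exact hcc θ this
      rw [ht] at this
      exact this
    obtain ⟨θs, hθsΘ, hθs⟩ := sion_finset hΘv hlsc hqcx husc hqcv α F hFΘ Φ hΦc hΦv hΦne
      (subset_refl Φ) hFhyp
    have : α ≤ g θs := le_ciInf fun φ => (hθs φ φ.2).le
    have : g θs ≤ g θ₀ := hθ₀max θs hθsΘ
    linarith
  exact ⟨⟨φ₀, hφ₀, θ₀, hθ₀, heq1, heq2⟩, by rw [heq1, heq2]; exact le_antisymm hge hle⟩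
end
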